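/- Let G be a free group on generators x, y (or a subgroup of a free group on three generators) and n ≥ 1 with n_6 = n/gcd(n,6). Then [[x,y],x]^{n_6} and [[x,y],y]^{n_6} lie in G^(4),n = G^(4)·G^n. -/

import Mathlib

/-- The commutator `[a,b] = a⁻¹ b⁻¹ a b`. -/
def commP {G : Type*} [Group G] (a b : G) : G := a⁻¹ * b⁻¹ * a * b

/-- The subgroup generated by `n`-th powers. -/
def powSubgroup (G : Type*) [Group G] (n : ℕ) : Subgroup G :=
  Subgroup.closure {x : G | ∃ g : G, g ^ n = x}

/-!
Modulo `γ₄ G ⊔ Gⁿ` the group has class at most three and exponent dividing `n`. Put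
`c = [a, b]`. The Hall–Petrescu formula for `(p q)ⁿ` in class three involves the exponents
`C(n,2)`, `C(n,3)` and `S = C(n,2) + 2 C(n,3) = ∑_{i<n} i²`; comparing it for the pairs `(b, a)`
and `(b, b a)`, which have the same commutator `c`, leaves `[c, b]^S = 1`. Since
`6 S = n (n - 1) (2 n - 1) ≡ n (mod n²)`, an order dividing both `n` and `S` divides
`n / gcd(n, 6)`. Finally `[[b, a], a] = [c, a]⁻¹` gives the other commutator.
-/

open Subgroup
open scoped commutatorElement

section Commutator

variable {G : Type*} [Group G]

theorem inv_mul_mul_eq_mul_commP (x y : G) : y⁻¹ * x * y = x * commP x y := by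
  simp only [commP]; group

theorem commP_inv (x y : G) : (commP x y)⁻¹ = commP y x := by
  simp only [commP]; group

theorem commP_inv_left (x y : G) : commP x⁻¹ y = x * (commP x y)⁻¹ * x⁻¹ := by
  simp only [commP]; group

theorem commP_mul_right (x y z : G) : commP x (y * z) = commP x z * (z⁻¹ * commP x y * z) := by
  simp only [commP]; group

theorem commP_mul_left_self (x y : G) : commP (y * x) y = commP x y := by
  simp only [commP]; group

theorem map_commP {H : Type*} [Group H] (f : G →* H) (x y : G) :
    f (commP x y) = commP (f x) (f y) := by
  simp only [commP, map_mul, map_inv]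

theorem commP_eq_commutatorElement (x y : G) : commP x y = ⁅x⁻¹, y⁻¹⁆ := by
  simp only [commP, commutatorElement_def, inv_inv]

theorem inv_mul_pow_mul (x y : G) (k : ℕ) : y⁻¹ * x ^ k * y = (y⁻¹ * x * y) ^ k := by
  simpa only [inv_inv] using (conj_pow (a := y⁻¹) (b := x)).symm

theorem inv_mul_pow_mul_of_commute {x y : G} (h : Commute x (commP x y)) (k : ℕ) :
    y⁻¹ * x ^ k * y = x ^ k * commP x y ^ k := by
  rw [inv_mul_pow_mul, inv_mul_mul_eq_mul_commP, h.mul_pow]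

theorem pow_mul_eq_mul_pow_mul_of_commute {x y : G} (h : Commute x (commP x y)) (k : ℕ) :
    x ^ k * y = y * (x ^ k * commP x y ^ k) := by
  rw [← inv_mul_pow_mul_of_commute h]; group

theorem mul_pow_of_commP_mem_center {x y : G} (h : commP y x ∈ center G) (k : ℕ) :
    (x * y) ^ k = x ^ k * y ^ k * commP y x ^ k.choose 2 := by
  have hz : ∀ g, Commute g (commP y x) := mem_center_iff.mp h
  induction k with
  | zero => simp
  | succ k ih =>
    have hC : (k + 1).choose 2 = k + k.choose 2 := by
      rw [Nat.choose_succ_succ', Nat.choose_one_right]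
    calc (x * y) ^ (k + 1) = x ^ k * y ^ k * commP y x ^ k.choose 2 * (x * y) := by
          rw [pow_succ, ih]
      _ = x ^ k * (y ^ k * x) * y * commP y x ^ k.choose 2 := by
          rw [((hz (x * y)).pow_right _).symm.right_comm]; group
      _ = x ^ k * x * y ^ k * (commP y x ^ k * y) * commP y x ^ k.choose 2 := by
          rw [pow_mul_eq_mul_pow_mul_of_commute (hz y)]; group
      _ = x ^ (k + 1) * y ^ (k + 1) * commP y x ^ (k + 1).choose 2 := by
          rw [← ((hz y).pow_right k).eq, hC, pow_add]; group

/-- The Hall–Petrescu formula in a group of class three. -/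
theorem mul_pow_of_commP_commP_mem_center {p q : G} (hd : commP (commP q p) p ∈ center G)
    (he : commP (commP q p) q ∈ center G) (k : ℕ) :
    (p * q) ^ k = p ^ k * (q ^ k * commP q p ^ k.choose 2 *
      (commP (commP q p) p ^ k.choose 3 *
        commP (commP q p) q ^ (k.choose 2 + 2 * k.choose 3))) := by
  set c := commP q p
  set d := commP c p
  set e := commP c q with he_def
  have hd' : ∀ g, Commute g d := mem_center_iff.mp hd
  have he' : ∀ g, Commute g e := mem_center_iff.mp he
  have hq (j : ℕ) : p⁻¹ * q ^ j * p = q ^ j * c ^ j * e ^ j.choose 2 := by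
    rw [inv_mul_pow_mul, inv_mul_mul_eq_mul_commP, mul_pow_of_commP_mem_center he]
  have hc (j : ℕ) : p⁻¹ * c ^ j * p = c ^ j * d ^ j := inv_mul_pow_mul_of_commute (hd' c) j
  induction k with
  | zero => simp
  | succ k ih =>
    set A := k.choose 2 with hA
    set Z := d ^ k.choose 3 * e ^ (A + 2 * k.choose 3)
    have hZ : Z ∈ center G := mul_mem (pow_mem hd _) (pow_mem he _)
    have hZ' : ∀ g, Commute g Z := mem_center_iff.mp hZ
    calc (p * q) ^ (k + 1) = p ^ k * (q ^ k * c ^ A * Z) * (p * q) := by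
          rw [pow_succ, ih]
      _ = p ^ (k + 1) * ((p⁻¹ * q ^ k * p) * (p⁻¹ * c ^ A * p) * (p⁻¹ * Z * p) * q) := by
          group
      _ = p ^ (k + 1) * (q ^ k * c ^ k * e ^ A * (c ^ A * d ^ A) * Z * q) := by
          rw [hq, hc, (hZ' p).inv_mul_cancel]
      _ = p ^ (k + 1) * (q ^ k * (c ^ k * c ^ A * q) * (e ^ A * d ^ A * Z)) := by
          simp only [mul_assoc]
          rw [← (hZ' q).eq, ((hd' q).pow_right A).symm.left_comm,
            ((he' (c ^ A)).pow_right A).symm.left_comm, ((he' q).pow_right A).symm.left_comm]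
      _ = p ^ (k + 1) * (q ^ k * q * c ^ (k + A) * (e ^ (k + A) * e ^ A * d ^ A * Z)) := by
          rw [← pow_add, pow_mul_eq_mul_pow_mul_of_commute (he' c), ← he_def]; group
      _ = p ^ (k + 1) * (q ^ (k + 1) * c ^ (k + 1).choose 2 * (d ^ (k + 1).choose 3 *
            e ^ ((k + 1).choose 2 + 2 * (k + 1).choose 3))) := by
          rw [Nat.choose_succ_succ' k 2, Nat.choose_succ_succ' k 1, Nat.choose_one_right, ← hA]
          simp only [Z, mul_assoc]
          rw [((hd' (e ^ A)).pow_right A).left_comm, ((hd' (e ^ (k + A))).pow_right A).left_comm,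
            ((hd' (e ^ A)).pow_right _).left_comm, ((hd' (e ^ (k + A))).pow_right _).left_comm]
          group

theorem commP_mem_lowerCentralSeries_succ {k : ℕ} {x : G}
    (hx : x ∈ (⊤ : Subgroup G).lowerCentralSeries k) (y : G) :
    commP x y ∈ (⊤ : Subgroup G).lowerCentralSeries (k + 1) := by
  rw [commP_eq_commutatorElement]
  exact commutator_mem_commutator (inv_mem hx) (mem_top _)

theorem mem_center_of_mem_lowerCentralSeries {k : ℕ} {x : G}
    (h : (⊤ : Subgroup G).lowerCentralSeries (k + 1) = ⊥)
    (hx : x ∈ (⊤ : Subgroup G).lowerCentralSeries k) : x ∈ center G :=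
  mem_center_iff.mpr fun g => by
    have hxg := commutator_mem_commutator hx (mem_top g)
    rw [← Subgroup.lowerCentralSeries_succ, h, mem_bot,
      commutatorElement_eq_one_iff_mul_comm] at hxg
    exact hxg.symm

theorem commP_commP_mem_center (h : (⊤ : Subgroup G).lowerCentralSeries 3 = ⊥) (p q r : G) :
    commP (commP p q) r ∈ center G :=
  mem_center_of_mem_lowerCentralSeries h
    (commP_mem_lowerCentralSeries_succ (commP_mem_lowerCentralSeries_succ (mem_top p) q) r)

end Commutator

section Numeric

theorem two_mul_choose_two_eq (n : ℕ) : 2 * (n.choose 2 : ℤ) = n * (n - 1) := by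
  induction n with
  | zero => simp
  | succ n ih =>
    rw [Nat.choose_succ_succ', Nat.choose_one_right]
    push_cast
    linear_combination ih

theorem six_mul_choose_two_add_two_mul_choose_three (n : ℕ) :
    6 * ((n.choose 2 + 2 * n.choose 3 : ℕ) : ℤ) = n * (n - 1) * (2 * n - 1) := by
  induction n with
  | zero => simp
  | succ n ih =>
    rw [Nat.choose_succ_succ' n 2, Nat.choose_succ_succ' n 1, Nat.choose_one_right]
    push_cast at ih ⊢
    linear_combination ih + 6 * two_mul_choose_two_eq n

theorem dvd_div_gcd_six {m n : ℕ} (hn : m ∣ n) (hS : m ∣ n.choose 2 + 2 * n.choose 3) :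
    m ∣ n / n.gcd 6 := by
  have hg : 0 < n.gcd 6 := Nat.gcd_pos_of_pos_right n (by norm_num)
  have ht : n = n.gcd 6 * (n / n.gcd 6) := (Nat.mul_div_cancel' (Nat.gcd_dvd_left n 6)).symm
  have hu : 6 = n.gcd 6 * (6 / n.gcd 6) := (Nat.mul_div_cancel' (Nat.gcd_dvd_right n 6)).symm
  set t := n / n.gcd 6
  set u := 6 / n.gcd 6
  have key : (t : ℤ) = u * (n.choose 2 + 2 * n.choose 3 : ℕ) - n * (t * (2 * n - 3)) := by
    have hsix := six_mul_choose_two_add_two_mul_choose_three n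
    have hg' : ((n.gcd 6 : ℕ) : ℤ) ≠ 0 := by exact_mod_cast hg.ne'
    apply mul_left_cancel₀ hg'
    have ht' : (n : ℤ) = n.gcd 6 * t := by exact_mod_cast ht
    have hu' : (6 : ℤ) = n.gcd 6 * u := by exact_mod_cast hu
    linear_combination ((n.choose 2 + 2 * n.choose 3 : ℕ) : ℤ) * hu' - hsix -
      (2 * n ^ 2 - 3 * n + 1 : ℤ) * ht'
  have : (m : ℤ) ∣ t := by
    rw [key]
    exact dvd_sub (dvd_mul_of_dvd_right (Int.natCast_dvd_natCast.mpr hS) _)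
      (dvd_mul_of_dvd_left (Int.natCast_dvd_natCast.mpr hn) _)
  exact_mod_cast this

end Numeric

section ClassThree

variable {G : Type*} [Group G] {n : ℕ}

theorem pow_commP_commP_right_eq_one (h : (⊤ : Subgroup G).lowerCentralSeries 3 = ⊥)
    (hexp : ∀ g : G, g ^ n = 1) (a b : G) : commP (commP a b) b ^ (n / n.gcd 6) = 1 := by
  have hc := commP_commP_mem_center h
  set c := commP a b with hc_def
  have hba := mul_pow_of_commP_commP_mem_center (hc a b b) (hc a b a) n
  have hbba := mul_pow_of_commP_commP_mem_center (p := b) (q := b * a)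
    (by rw [commP_mul_left_self]; exact hc a b b) (by rw [commP_mul_left_self]; exact hc a b _) n
  have hcba : commP c (b * a) = commP c a * commP c b := by
    rw [commP_mul_right, ((hc a b b).comm a).symm.inv_mul_cancel]
  rw [commP_mul_left_self, hcba, ((hc a b b).comm _).symm.mul_pow] at hbba
  simp only [hexp, one_mul, ← hc_def] at hba hbba
  have hS : commP c b ^ (n.choose 2 + 2 * n.choose 3) = 1 := by
    have h1 : c ^ n.choose 2 * (commP c b ^ n.choose 3 * commP c a ^ (n.choose 2 + 2 * n.choose 3))
        * commP c b ^ (n.choose 2 + 2 * n.choose 3) = 1 := by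
      rw [hbba]; group
    rwa [← hba, one_mul] at h1
  exact orderOf_dvd_iff_pow_eq_one.mp
    (dvd_div_gcd_six (orderOf_dvd_of_pow_eq_one (hexp _)) (orderOf_dvd_of_pow_eq_one hS))

theorem pow_commP_commP_left_eq_one (h : (⊤ : Subgroup G).lowerCentralSeries 3 = ⊥)
    (hexp : ∀ g : G, g ^ n = 1) (a b : G) : commP (commP a b) a ^ (n / n.gcd 6) = 1 := by
  have hba := pow_commP_commP_right_eq_one h hexp b a
  rwa [← commP_inv a b, commP_inv_left,
    ((commP_commP_mem_center h a b a).comm _).symm.inv_right.mul_inv_cancel, inv_pow,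
    inv_eq_one] at hba

end ClassThree

instance powSubgroup_characteristic (G : Type*) [Group G] (n : ℕ) :
    (powSubgroup G n).Characteristic :=
  characteristic_iff_map_le.mpr fun φ => by
    rw [powSubgroup, MonoidHom.map_closure]
    exact closure_mono (by rintro _ ⟨_, ⟨g, rfl⟩, rfl⟩; exact ⟨φ g, (map_pow φ g n).symm⟩)

section Quotient

variable {G : Type*} [Group G] {N : Subgroup G} [N.Normal]

theorem lowerCentralSeries_quotient_eq_bot {k : ℕ}
    (h : (⊤ : Subgroup G).lowerCentralSeries k ≤ N) :
    (⊤ : Subgroup (G ⧸ N)).lowerCentralSeries k = ⊥ := by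
  rw [← map_top_of_surjective _ (QuotientGroup.mk'_surjective N), ← map_lowerCentralSeries,
    Subgroup.map_eq_bot_iff, QuotientGroup.ker_mk']
  exact h

theorem pow_eq_one_of_powSubgroup_le {n : ℕ} (h : powSubgroup G n ≤ N) (g : G ⧸ N) :
    g ^ n = 1 := by
  induction g using QuotientGroup.induction_on with
  | H g =>
    rw [← QuotientGroup.mk_pow, QuotientGroup.eq_one_iff]
    exact h (subset_closure ⟨g, rfl⟩)

end Quotient

theorem triple_comm_pow_n6_mem_general (n : ℕ) :
    let G := FreeGroup (Fin 2)
    let x : G := FreeGroup.of 0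
    let y : G := FreeGroup.of 1
    (commP (commP x y) x) ^ (n / Nat.gcd n 6)
        ∈ Subgroup.lowerCentralSeries (⊤ : Subgroup G) 3 ⊔ powSubgroup G n ∧
      (commP (commP x y) y) ^ (n / Nat.gcd n 6)
        ∈ Subgroup.lowerCentralSeries (⊤ : Subgroup G) 3 ⊔ powSubgroup G n := by
  intro G x y
  set H := (⊤ : Subgroup G).lowerCentralSeries 3 ⊔ powSubgroup G n
  have hQ : (⊤ : Subgroup (G ⧸ H)).lowerCentralSeries 3 = ⊥ :=
    lowerCentralSeries_quotient_eq_bot le_sup_left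
  have hexp : ∀ g : G ⧸ H, g ^ n = 1 := pow_eq_one_of_powSubgroup_le le_sup_right
  simp only [← QuotientGroup.eq_one_iff, ← QuotientGroup.mk'_apply, map_pow, map_commP]
  exact ⟨pow_commP_commP_left_eq_one hQ hexp _ _, pow_commP_commP_right_eq_one hQ hexp _ _⟩

theorem triple_comm_pow_n6_mem (n : ℕ) (hn : 1 ≤ n) :
    let G := FreeGroup (Fin 2)
    let x : G := FreeGroup.of 0
    let y : G := FreeGroup.of 1
    (commP (commP x y) x) ^ (n / Nat.gcd n 6)
        ∈ Subgroup.lowerCentralSeries (⊤ : Subgroup G) 3 ⊔ powSubgroup G n ∧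
      (commP (commP x y) y) ^ (n / Nat.gcd n 6)
        ∈ Subgroup.lowerCentralSeries (⊤ : Subgroup G) 3 ⊔ powSubgroup G n :=
  triple_comm_pow_n6_mem_general n
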